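/- arXiv:math/0508017 — 5 statements merged into one kernel-verified Lean document; each statement's English description precedes it below -/
import Mathlib

section
/- For every n ≥ 1, the set of all step matrices with nonzero entries {1,…,n} (taken over all matrix sizes q×p) is in bijective correspondence with the symmetric group S_n; in particular, there are exactly n! such step matrices. -/
/-- A `q × p` step matrix with nonzero entries `{1,…,n}`: entries lie in `{0,1,…,n}`;
each element of `{1,…,n}` appears exactly once; in each row (resp. column) the nonzero
entries occupy consecutive positions and increase from left to right (resp. top to
bottom); and each diagonal parallel to the main diagonal contains exactly one nonzero
entry. (Rows and columns are indexed by `Fin q` and `Fin p`; the diagonal through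
position `(i,j)` is determined by `j - i`.) -/
def IsStepMatrix (n q p : ℕ) (E : Fin q → Fin p → ℕ) : Prop :=
  (∀ i j, E i j ≤ n) ∧
  (∀ k : ℕ, 1 ≤ k → k ≤ n → ∃! ij : Fin q × Fin p, E ij.1 ij.2 = k) ∧
  (∀ (i : Fin q) (j₁ j₂ j₃ : Fin p), j₁ ≤ j₂ → j₂ ≤ j₃ →
    E i j₁ ≠ 0 → E i j₃ ≠ 0 → E i j₂ ≠ 0) ∧
  (∀ (i : Fin q) (j₁ j₂ : Fin p), j₁ < j₂ →
    E i j₁ ≠ 0 → E i j₂ ≠ 0 → E i j₁ < E i j₂) ∧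
  (∀ (j : Fin p) (i₁ i₂ i₃ : Fin q), i₁ ≤ i₂ → i₂ ≤ i₃ →
    E i₁ j ≠ 0 → E i₃ j ≠ 0 → E i₂ j ≠ 0) ∧
  (∀ (j : Fin p) (i₁ i₂ : Fin q), i₁ < i₂ →
    E i₁ j ≠ 0 → E i₂ j ≠ 0 → E i₁ j < E i₂ j) ∧
  (∀ c : ℤ, 1 - (q : ℤ) ≤ c → c ≤ (p : ℤ) - 1 →
    ∃! ij : Fin q × Fin p, ((ij.2 : ℤ) - (ij.1 : ℤ) = c ∧ E ij.1 ij.2 ≠ 0))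

/-- The type of all step matrices with nonzero entries `{1,…,n}`, over all matrix
sizes `q × p` with `q, p ≥ 1`. -/
structure StepMatrix (n : ℕ) where
  q : ℕ
  p : ℕ
  hq : 1 ≤ q
  hp : 1 ≤ p
  E : Fin q → Fin p → ℕ
  isStep : IsStepMatrix n q p E

/-!
Read the nonzero entries of a step matrix diagonal by diagonal, starting from the bottom-left
corner. Row and column convexity together with "one nonzero entry per diagonal" force the
nonzero cells to form a lattice path from `(q - 1, 0)` to `(0, p - 1)` that moves either one
column right or one row up from each diagonal to the next; since rows increase to the right
and columns increase downwards, the path moves right exactly at the ascents of the word read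
off and up exactly at its descents. So `q + p - 1 = n`, the word is a permutation of
`1, …, n`, and the matrix is recovered from it: `q - 1` is its number of descents and its
`m`-th letter sits in row `q - 1 - d` and column `m - d`, `d` being the number of descents
among its first `m + 1` letters. Conversely, this recipe turns every permutation into a step
matrix.
-/

/-- The number of descents among the first `m + 1` letters `σ 0, …, σ m`. -/
def descentCount (σ : ℕ → ℕ) : ℕ → ℕ := Nat.count fun t => σ (t + 1) < σ t

section Descents

variable (σ : ℕ → ℕ)

theorem descentCount_succ (m : ℕ) :
    descentCount σ (m + 1) = descentCount σ m + if σ (m + 1) < σ m then 1 else 0 :=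
  Nat.count_succ _ m

theorem descentCount_mono : Monotone (descentCount σ) := Nat.count_monotone _

theorem descentCount_le (m : ℕ) : descentCount σ m ≤ m := Nat.count_le _

theorem descentCount_le_add_sub {a b : ℕ} (h : a ≤ b) :
    descentCount σ b ≤ descentCount σ a + (b - a) := by
  obtain ⟨c, rfl⟩ := Nat.exists_eq_add_of_le h
  rw [descentCount, Nat.count_add, Nat.add_sub_cancel_left]
  exact Nat.add_le_add_left (Nat.count_le _) _

variable {σ}

theorem not_descent_of_descentCount_eq {a b t : ℕ} (hat : a ≤ t) (htb : t < b)
    (h : descentCount σ b = descentCount σ a) : ¬σ (t + 1) < σ t := by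
  intro hdesc
  have hsucc := descentCount_succ σ t
  rw [if_pos hdesc] at hsucc
  have := descentCount_mono σ hat
  have := descentCount_mono σ (show t + 1 ≤ b by omega)
  omega

theorem descent_of_descentCount_eq_add {a b t : ℕ} (hat : a ≤ t) (htb : t < b)
    (h : descentCount σ b = descentCount σ a + (b - a)) : σ (t + 1) < σ t := by
  by_contra hdesc
  have hsucc := descentCount_succ σ t
  rw [if_neg hdesc] at hsucc
  have := descentCount_le_add_sub σ hat
  have := descentCount_le_add_sub σ (show t + 1 ≤ b by omega)
  omega

theorem descentCount_congr {τ : ℕ → ℕ} {m : ℕ} (h : ∀ t ≤ m, σ t = τ t) :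
    descentCount σ m = descentCount τ m := by
  simp only [descentCount, Nat.count_eq_card_filter_range]
  refine congrArg Finset.card (Finset.filter_congr fun t ht => ?_)
  rw [Finset.mem_range] at ht
  rw [h t ht.le, h (t + 1) ht]

theorem strictMonoOn_of_descentCount_eq {n a b : ℕ} (hσ : Set.InjOn σ (Set.Iio n)) (hb : b < n)
    (h : descentCount σ b = descentCount σ a) : StrictMonoOn σ (Set.Icc a b) :=
  strictMonoOn_of_lt_add_one Set.ordConnected_Icc fun t _ ht ht' => by
    refine lt_of_le_of_ne (not_lt.mp (not_descent_of_descentCount_eq ht.1 ht'.2 h)) fun heq => ?_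
    have := hσ (show t < n by grind) (show t + 1 < n by grind) heq
    omega

theorem strictAntiOn_of_descentCount_eq_add {a b : ℕ}
    (h : descentCount σ b = descentCount σ a + (b - a)) : StrictAntiOn σ (Set.Icc a b) :=
  strictAntiOn_of_add_one_lt Set.ordConnected_Icc fun _ _ ht ht' =>
    descent_of_descentCount_eq_add ht.1 ht'.2 h

end Descents

theorem exists_eq_of_map_succ_le_add_one {f : ℕ → ℕ} {m r : ℕ}
    (hf : ∀ k < m, f (k + 1) ≤ f k + 1) (h₀ : f 0 ≤ r) (hm : r ≤ f m) : ∃ k ≤ m, f k = r := by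
  induction m with
  | zero => exact ⟨0, le_rfl, le_antisymm hm h₀ |>.symm⟩
  | succ m ih =>
    by_cases hr : r ≤ f m
    · obtain ⟨k, hk, hfk⟩ := ih (fun k hk => hf k (by omega)) hr
      exact ⟨k, by omega, hfk⟩
    · exact ⟨m + 1, le_rfl, by have := hf m (by omega); omega⟩

namespace StepMatrix

variable {n : ℕ} (M : StepMatrix n)

/-- The nonzero cell on the `m`-th diagonal, where the cell `(i, j)` lies on diagonal
`j + (q - 1) - i`, so that diagonals are numbered from the bottom-left corner on
(junk once `m ≥ q + p - 1`). -/
noncomputable def diagCell (m : ℕ) : Fin M.q × Fin M.p :=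
  if h : m + 2 ≤ M.q + M.p then
    (M.isStep.2.2.2.2.2.2 ((m : ℤ) - (M.q - 1)) (by omega) (by omega)).choose
  else (⟨0, M.hq⟩, ⟨0, M.hp⟩)

noncomputable def word (m : ℕ) : ℕ := M.E (M.diagCell m).1 (M.diagCell m).2

variable {M}

theorem diagCell_spec {m : ℕ} (hm : m + 2 ≤ M.q + M.p) :
    ((M.diagCell m).2 : ℕ) + (M.q - 1) = m + (M.diagCell m).1 ∧ M.word m ≠ 0 := by
  have hq := M.hq
  have h := (M.isStep.2.2.2.2.2.2 ((m : ℤ) - (M.q - 1)) (by omega) (by omega)).choose_spec.1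
  simp only [word, diagCell, dif_pos hm]
  exact ⟨by omega, h.2⟩

theorem eq_diagCell {m : ℕ} {ij : Fin M.q × Fin M.p} (hd : (ij.2 : ℕ) + (M.q - 1) = m + ij.1)
    (hne : M.E ij.1 ij.2 ≠ 0) : ij = M.diagCell m := by
  have hq := M.hq
  have hm : m + 2 ≤ M.q + M.p := by omega
  simp only [diagCell, dif_pos hm]
  exact (M.isStep.2.2.2.2.2.2 ((m : ℤ) - (M.q - 1)) (by omega) (by omega)).choose_spec.2 ij
    ⟨by omega, hne⟩

theorem word_le (m : ℕ) : M.word m ≤ n := M.isStep.1 _ _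

theorem word_bijOn : Set.BijOn M.word (Set.Iio (M.q + M.p - 1)) (Set.Icc 1 n) := by
  have hq := M.hq
  refine ⟨fun m hm => ⟨Nat.one_le_iff_ne_zero.mpr (diagCell_spec (by grind)).2, word_le m⟩,
    fun m₁ hm₁ m₂ hm₂ heq => ?_, fun k ⟨hk₁, hk₂⟩ => ?_⟩
  · obtain ⟨hd₁, hne⟩ := diagCell_spec (M := M) (m := m₁) (by grind)
    have hd₂ := (diagCell_spec (M := M) (m := m₂) (by grind)).1
    have hcell : M.diagCell m₁ = M.diagCell m₂ :=
      (M.isStep.2.1 (M.word m₁) (by omega) (word_le m₁)).unique rfl heq.symm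
    rw [hcell] at hd₁
    omega
  · obtain ⟨ij, hij, -⟩ := M.isStep.2.1 k hk₁ hk₂
    have hi := ij.1.isLt
    refine ⟨ij.2 + (M.q - 1) - ij.1, by grind, ?_⟩
    rw [word, ← eq_diagCell (ij := ij) (by omega) (by omega), hij]

theorem q_add_p : M.q + M.p = n + 1 := by
  have h := word_bijOn.ncard_eq (f := M.word)
  simp only [Set.ncard_Iio_nat, Set.ncard_Icc_nat] at h
  have := M.hq
  omega

theorem diagCell_zero_fst : ((M.diagCell 0).1 : ℕ) = M.q - 1 := by
  have hd := (diagCell_spec (M := M) (m := 0) (by have := M.hq; have := M.hp; omega)).1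
  have := (M.diagCell 0).1.isLt
  omega

theorem diagCell_last_fst : ((M.diagCell (M.q + M.p - 2)).1 : ℕ) = 0 := by
  have hd := (diagCell_spec (M := M) (m := M.q + M.p - 2) (by have := M.hq; have := M.hp; omega)).1
  have := (M.diagCell (M.q + M.p - 2)).2.isLt
  omega

/- If the path of nonzero cells, which so far never climbed more than one row per diagonal,
now went down, the row it lands in was already visited further left; row convexity then puts
a second nonzero cell on the `m`-th diagonal. -/
theorem diagCell_succ_fst_le {m : ℕ} (hm : m + 3 ≤ M.q + M.p)
    (hclimb : ∀ k < m, ((M.diagCell k).1 : ℕ) ≤ (M.diagCell (k + 1)).1 + 1) :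
    ((M.diagCell (m + 1)).1 : ℕ) ≤ (M.diagCell m).1 := by
  by_contra! hlt
  obtain ⟨hd, hne⟩ := diagCell_spec (M := M) (m := m + 1) (by omega)
  have hdm := (diagCell_spec (M := M) (m := m) (by omega)).1
  have hi := (M.diagCell (m + 1)).1.isLt
  obtain ⟨k, hk, hrow⟩ := exists_eq_of_map_succ_le_add_one
    (f := fun k => M.q - 1 - (M.diagCell k).1) (r := M.q - 1 - (M.diagCell (m + 1)).1)
    (fun k hk => by have := hclimb k hk; omega) (by simp [diagCell_zero_fst]) (by omega)
  obtain ⟨hdk, hnek⟩ := diagCell_spec (M := M) (m := k) (by omega)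
  have hrowk : (M.diagCell k).1 = (M.diagCell (m + 1)).1 := by
    have := (M.diagCell k).1.isLt; ext; omega
  let left : Fin M.p := ⟨(M.diagCell (m + 1)).2 - 1, by omega⟩
  have hleft : M.E (M.diagCell (m + 1)).1 left ≠ 0 := by
    obtain ⟨-, -, hrowConvex, -⟩ := M.isStep
    refine hrowConvex _ (M.diagCell k).2 left _ ?_ ?_ (hrowk ▸ hnek) hne <;>
      simp only [Fin.le_def, left] <;> omega
  have := congrArg (fun ij => (ij.1 : ℕ)) (eq_diagCell (m := m)
    (ij := ((M.diagCell (m + 1)).1, left)) (by simp only [left]; omega) hleft)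
  simp only at this
  omega

/- Symmetrically, a climb of two rows or more would skip a column that was already visited
further down; column convexity then puts a second nonzero cell on the `m`-th diagonal. -/
theorem diagCell_fst_le_succ {m : ℕ} (hm : m + 3 ≤ M.q + M.p)
    (hdescend : ∀ k < m, ((M.diagCell (k + 1)).1 : ℕ) ≤ (M.diagCell k).1) :
    ((M.diagCell m).1 : ℕ) ≤ (M.diagCell (m + 1)).1 + 1 := by
  by_contra! hlt
  obtain ⟨hd, hne⟩ := diagCell_spec (M := M) (m := m + 1) (by omega)
  have hdm := (diagCell_spec (M := M) (m := m) (by omega)).1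
  have hi := (M.diagCell m).1.isLt
  obtain ⟨k, hk, hcol⟩ := exists_eq_of_map_succ_le_add_one
    (f := fun k => ((M.diagCell k).2 : ℕ)) (r := (M.diagCell (m + 1)).2)
    (fun k hk => by
      have := hdescend k hk
      have := (diagCell_spec (M := M) (m := k) (by omega)).1
      have := (diagCell_spec (M := M) (m := k + 1) (by omega)).1
      omega)
    (by
      have := (diagCell_spec (M := M) (m := 0) (by omega)).1
      have := diagCell_zero_fst (M := M)
      omega)
    (by omega)
  obtain ⟨hdk, hnek⟩ := diagCell_spec (M := M) (m := k) (by omega)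
  have hcolk : (M.diagCell k).2 = (M.diagCell (m + 1)).2 := Fin.ext hcol
  let below : Fin M.q := ⟨(M.diagCell (m + 1)).1 + 1, by omega⟩
  have hbelow : M.E below (M.diagCell (m + 1)).2 ≠ 0 := by
    obtain ⟨-, -, -, -, hcolConvex, -⟩ := M.isStep
    refine hcolConvex _ _ below (M.diagCell k).1 ?_ ?_ hne (hcolk ▸ hnek) <;>
      simp only [Fin.le_def, below] <;> omega
  have := congrArg (fun ij => (ij.2 : ℕ)) (eq_diagCell (m := m)
    (ij := (below, (M.diagCell (m + 1)).2)) (by simp only [below]; omega) hbelow)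
  simp only at this
  omega

theorem diagCell_succ_fst {m : ℕ} (hm : m + 3 ≤ M.q + M.p) :
    ((M.diagCell (m + 1)).1 : ℕ) ≤ (M.diagCell m).1 ∧
      ((M.diagCell m).1 : ℕ) ≤ (M.diagCell (m + 1)).1 + 1 := by
  induction m using Nat.strong_induction_on with
  | _ m ih =>
    exact ⟨diagCell_succ_fst_le hm fun k hk => (ih k hk (by omega)).2,
      diagCell_fst_le_succ hm fun k hk => (ih k hk (by omega)).1⟩

theorem diagCell_succ_fst_add {m : ℕ} (hm : m + 3 ≤ M.q + M.p) :
    ((M.diagCell (m + 1)).1 : ℕ) + (if M.word (m + 1) < M.word m then 1 else 0) =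
      (M.diagCell m).1 := by
  obtain ⟨hd, hne⟩ := diagCell_spec (M := M) (m := m + 1) (by omega)
  obtain ⟨hd', hne'⟩ := diagCell_spec (M := M) (m := m) (by omega)
  obtain ⟨h₁, h₂⟩ := diagCell_succ_fst (M := M) hm
  obtain ⟨-, -, -, hrowLt, -, hcolLt, -⟩ := M.isStep
  unfold word at hne hne' ⊢
  rcases (show ((M.diagCell (m + 1)).1 : ℕ) = (M.diagCell m).1 ∨
      ((M.diagCell (m + 1)).1 : ℕ) + 1 = (M.diagCell m).1 by omega) with hrow | hrow
  · have hrow' : (M.diagCell (m + 1)).1 = (M.diagCell m).1 := Fin.ext hrow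
    rw [hrow'] at hne ⊢
    have := hrowLt _ _ _ (Fin.lt_def.mpr (by omega)) hne' hne
    rw [if_neg (by omega)]
    omega
  · have hcol : (M.diagCell (m + 1)).2 = (M.diagCell m).2 := Fin.ext (by omega)
    rw [hcol] at hne ⊢
    have := hcolLt _ _ _ (Fin.lt_def.mpr (by omega)) hne hne'
    rw [if_pos this]
    omega

theorem diagCell_fst_add_descentCount {m : ℕ} (hm : m + 2 ≤ M.q + M.p) :
    ((M.diagCell m).1 : ℕ) + descentCount M.word m = M.q - 1 := by
  induction m with
  | zero => rw [diagCell_zero_fst, descentCount, Nat.count_zero, add_zero]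
  | succ m ih =>
    rw [descentCount_succ, ← ih (by omega), ← diagCell_succ_fst_add (m := m) (by omega)]
    ac_rfl

theorem descentCount_word_last : descentCount M.word (M.q + M.p - 2) = M.q - 1 := by
  have := diagCell_fst_add_descentCount (M := M) (m := M.q + M.p - 2)
    (by have := M.hq; have := M.hp; omega)
  rwa [diagCell_last_fst, zero_add] at this

end StepMatrix

/-- The letter `σ m` goes to row `D - descentCount σ m` and column `m - descentCount σ m`,
where `D = descentCount σ (n - 1)` is the number of descents of `σ 0, …, σ (n - 1)`; this is
the cell `(i, j)` of diagonal `m = j + D - i` with `i + descentCount σ m = D`. -/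
def wordMatrix (n : ℕ) (σ : ℕ → ℕ) :
    Fin (descentCount σ (n - 1) + 1) → Fin (n - descentCount σ (n - 1)) → ℕ := fun i j =>
  if (i : ℕ) + descentCount σ (j + descentCount σ (n - 1) - i) = descentCount σ (n - 1) then
    σ (j + descentCount σ (n - 1) - i)
  else 0

section WordMatrix

variable {n : ℕ} {σ : ℕ → ℕ}

theorem wordMatrix_diag_lt (i : Fin (descentCount σ (n - 1) + 1))
    (j : Fin (n - descentCount σ (n - 1))) : j + descentCount σ (n - 1) - i < n := by
  have := i.isLt
  have := j.isLt
  omega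

theorem wordMatrix_apply_of_eq {i : Fin (descentCount σ (n - 1) + 1)}
    {j : Fin (n - descentCount σ (n - 1))}
    (h : (i : ℕ) + descentCount σ (j + descentCount σ (n - 1) - i) = descentCount σ (n - 1)) :
    wordMatrix n σ i j = σ (j + descentCount σ (n - 1) - i) :=
  if_pos h

theorem wordMatrix_ne_zero_iff (hσ : Set.MapsTo σ (Set.Iio n) (Set.Icc 1 n))
    (i : Fin (descentCount σ (n - 1) + 1)) (j : Fin (n - descentCount σ (n - 1))) :
    wordMatrix n σ i j ≠ 0 ↔
      (i : ℕ) + descentCount σ (j + descentCount σ (n - 1) - i) = descentCount σ (n - 1) := by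
  have := (hσ (wordMatrix_diag_lt i j)).1
  unfold wordMatrix
  split_ifs with h
  · exact iff_of_true (by omega) h
  · exact iff_of_false (not_not_intro rfl) h

theorem exists_wordMatrix_cell {m : ℕ} (hm : m < n) :
    ∃ ij : Fin (descentCount σ (n - 1) + 1) × Fin (n - descentCount σ (n - 1)),
      ij.2 + descentCount σ (n - 1) - ij.1 = m ∧ wordMatrix n σ ij.1 ij.2 = σ m := by
  have := descentCount_mono σ (show m ≤ n - 1 by omega)
  have := descentCount_le σ m
  have := descentCount_le_add_sub σ (show m ≤ n - 1 by omega)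
  have hdiag : m - descentCount σ m + descentCount σ (n - 1) -
      (descentCount σ (n - 1) - descentCount σ m) = m := by omega
  refine ⟨(⟨descentCount σ (n - 1) - descentCount σ m, by omega⟩,
    ⟨m - descentCount σ m, by omega⟩), hdiag, ?_⟩
  rw [wordMatrix_apply_of_eq (by simp only [hdiag]; omega)]
  simp only [hdiag]

theorem wordMatrix_cell_unique (hσ : Set.MapsTo σ (Set.Iio n) (Set.Icc 1 n))
    {ij ij' : Fin (descentCount σ (n - 1) + 1) × Fin (n - descentCount σ (n - 1))}
    (hne : wordMatrix n σ ij.1 ij.2 ≠ 0) (hne' : wordMatrix n σ ij'.1 ij'.2 ≠ 0)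
    (hdiag : ij.2 + descentCount σ (n - 1) - ij.1 = ij'.2 + descentCount σ (n - 1) - ij'.1) :
    ij = ij' := by
  rw [wordMatrix_ne_zero_iff hσ] at hne hne'
  rw [hdiag] at hne
  have := ij.1.isLt
  have := ij'.1.isLt
  ext <;> omega

theorem wordMatrix_le (hσ : Set.MapsTo σ (Set.Iio n) (Set.Icc 1 n))
    (i : Fin (descentCount σ (n - 1) + 1)) (j : Fin (n - descentCount σ (n - 1))) :
    wordMatrix n σ i j ≤ n := by
  unfold wordMatrix
  split_ifs
  exacts [(hσ (wordMatrix_diag_lt i j)).2, Nat.zero_le n]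

theorem existsUnique_wordMatrix_eq (hσ : Set.BijOn σ (Set.Iio n) (Set.Icc 1 n)) {k : ℕ}
    (hk₁ : 1 ≤ k) (hk₂ : k ≤ n) :
    ∃! ij : Fin (descentCount σ (n - 1) + 1) × Fin (n - descentCount σ (n - 1)),
      wordMatrix n σ ij.1 ij.2 = k := by
  obtain ⟨m, hm, rfl⟩ := hσ.surjOn ⟨hk₁, hk₂⟩
  obtain ⟨ij, hdiag, hval⟩ := exists_wordMatrix_cell (σ := σ) hm
  refine ⟨ij, hval, fun ij' (hval' : wordMatrix n σ ij'.1 ij'.2 = σ m) =>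
    wordMatrix_cell_unique hσ.mapsTo (by omega) (by omega) ?_⟩
  have hne' : wordMatrix n σ ij'.1 ij'.2 ≠ 0 := by omega
  rw [wordMatrix_apply_of_eq ((wordMatrix_ne_zero_iff hσ.mapsTo _ _).mp hne')] at hval'
  rw [hσ.injOn (wordMatrix_diag_lt _ _) hm hval', hdiag]

theorem wordMatrix_row_convex (hσ : Set.MapsTo σ (Set.Iio n) (Set.Icc 1 n))
    (i : Fin (descentCount σ (n - 1) + 1)) {j₁ j₂ j₃ : Fin (n - descentCount σ (n - 1))}
    (h₁₂ : j₁ ≤ j₂) (h₂₃ : j₂ ≤ j₃) (h₁ : wordMatrix n σ i j₁ ≠ 0)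
    (h₃ : wordMatrix n σ i j₃ ≠ 0) : wordMatrix n σ i j₂ ≠ 0 := by
  rw [wordMatrix_ne_zero_iff hσ] at h₁ h₃ ⊢
  rw [Fin.le_def] at h₁₂ h₂₃
  have := descentCount_mono σ (show j₁ + descentCount σ (n - 1) - i ≤
    j₂ + descentCount σ (n - 1) - i by omega)
  have := descentCount_mono σ (show j₂ + descentCount σ (n - 1) - i ≤
    j₃ + descentCount σ (n - 1) - i by omega)
  omega

theorem wordMatrix_row_lt (hσ : Set.BijOn σ (Set.Iio n) (Set.Icc 1 n))
    (i : Fin (descentCount σ (n - 1) + 1)) {j₁ j₂ : Fin (n - descentCount σ (n - 1))}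
    (h₁₂ : j₁ < j₂) (h₁ : wordMatrix n σ i j₁ ≠ 0) (h₂ : wordMatrix n σ i j₂ ≠ 0) :
    wordMatrix n σ i j₁ < wordMatrix n σ i j₂ := by
  rw [wordMatrix_ne_zero_iff hσ.mapsTo] at h₁ h₂
  rw [wordMatrix_apply_of_eq h₁, wordMatrix_apply_of_eq h₂]
  rw [Fin.lt_def] at h₁₂
  have hi := i.isLt
  exact strictMonoOn_of_descentCount_eq hσ.injOn (wordMatrix_diag_lt i j₂) (by omega)
    ⟨le_rfl, by omega⟩ ⟨by omega, le_rfl⟩ (by omega)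

theorem wordMatrix_col_convex (hσ : Set.MapsTo σ (Set.Iio n) (Set.Icc 1 n))
    (j : Fin (n - descentCount σ (n - 1))) {i₁ i₂ i₃ : Fin (descentCount σ (n - 1) + 1)}
    (h₁₂ : i₁ ≤ i₂) (h₂₃ : i₂ ≤ i₃) (h₁ : wordMatrix n σ i₁ j ≠ 0)
    (h₃ : wordMatrix n σ i₃ j ≠ 0) : wordMatrix n σ i₂ j ≠ 0 := by
  rw [wordMatrix_ne_zero_iff hσ] at h₁ h₃ ⊢
  rw [Fin.le_def] at h₁₂ h₂₃
  have := i₃.isLt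
  have := descentCount_le_add_sub σ (show j + descentCount σ (n - 1) - i₂ ≤
    j + descentCount σ (n - 1) - i₁ by omega)
  have := descentCount_le_add_sub σ (show j + descentCount σ (n - 1) - i₃ ≤
    j + descentCount σ (n - 1) - i₂ by omega)
  omega

theorem wordMatrix_col_lt (hσ : Set.MapsTo σ (Set.Iio n) (Set.Icc 1 n))
    (j : Fin (n - descentCount σ (n - 1))) {i₁ i₂ : Fin (descentCount σ (n - 1) + 1)}
    (h₁₂ : i₁ < i₂) (h₁ : wordMatrix n σ i₁ j ≠ 0) (h₂ : wordMatrix n σ i₂ j ≠ 0) :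
    wordMatrix n σ i₁ j < wordMatrix n σ i₂ j := by
  rw [wordMatrix_ne_zero_iff hσ] at h₁ h₂
  rw [wordMatrix_apply_of_eq h₁, wordMatrix_apply_of_eq h₂]
  rw [Fin.lt_def] at h₁₂
  have := i₂.isLt
  exact strictAntiOn_of_descentCount_eq_add (by omega) ⟨le_rfl, by omega⟩ ⟨by omega, le_rfl⟩
    (by omega)

theorem existsUnique_wordMatrix_diag (hσ : Set.MapsTo σ (Set.Iio n) (Set.Icc 1 n)) {c : ℤ}
    (hc₁ : 1 - ((descentCount σ (n - 1) + 1 : ℕ) : ℤ) ≤ c)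
    (hc₂ : c ≤ ((n - descentCount σ (n - 1) : ℕ) : ℤ) - 1) :
    ∃! ij : Fin (descentCount σ (n - 1) + 1) × Fin (n - descentCount σ (n - 1)),
      (ij.2 : ℤ) - ij.1 = c ∧ wordMatrix n σ ij.1 ij.2 ≠ 0 := by
  have := descentCount_le σ (n - 1)
  obtain ⟨ij, hdiag, hval⟩ :=
    exists_wordMatrix_cell (n := n) (σ := σ) (m := (c + descentCount σ (n - 1)).toNat) (by omega)
  have hne : wordMatrix n σ ij.1 ij.2 ≠ 0 := by
    rw [hval]
    exact Nat.one_le_iff_ne_zero.mp (hσ (show (c + descentCount σ (n - 1)).toNat < n by omega)).1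
  refine ⟨ij, ⟨by omega, hne⟩, fun ij' ⟨hdiag', hne'⟩ =>
    wordMatrix_cell_unique hσ hne' hne (by omega)⟩

theorem isStepMatrix_wordMatrix (hσ : Set.BijOn σ (Set.Iio n) (Set.Icc 1 n)) :
    IsStepMatrix n (descentCount σ (n - 1) + 1) (n - descentCount σ (n - 1)) (wordMatrix n σ) :=
  ⟨wordMatrix_le hσ.mapsTo, fun _ => existsUnique_wordMatrix_eq hσ,
    fun i _ _ _ => wordMatrix_row_convex hσ.mapsTo i, fun i _ _ => wordMatrix_row_lt hσ i,
    fun j _ _ _ => wordMatrix_col_convex hσ.mapsTo j, fun j _ _ => wordMatrix_col_lt hσ.mapsTo j,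
    fun _ => existsUnique_wordMatrix_diag hσ.mapsTo⟩

end WordMatrix

section PermWord

variable {n : ℕ}

def permWord (w : Equiv.Perm (Fin n)) (t : ℕ) : ℕ :=
  if h : t < n then w ⟨t, h⟩ + 1 else 0

theorem permWord_bijOn (w : Equiv.Perm (Fin n)) :
    Set.BijOn (permWord w) (Set.Iio n) (Set.Icc 1 n) := by
  refine ⟨fun t (ht : t < n) => ?_, fun t₁ (ht₁ : t₁ < n) t₂ (ht₂ : t₂ < n) h => ?_,
    fun k ⟨hk₁, hk₂⟩ => ?_⟩
  · simp only [permWord, dif_pos ht, Set.mem_Icc]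
    exact ⟨Nat.le_add_left 1 _, (w _).isLt⟩
  · simp only [permWord, dif_pos ht₁, dif_pos ht₂, Nat.add_right_cancel_iff] at h
    exact congrArg Fin.val (w.injective (Fin.ext h))
  · refine ⟨w.symm ⟨k - 1, by omega⟩, (w.symm _).isLt, ?_⟩
    simp only [permWord, dif_pos (w.symm _).isLt, Fin.eta, Equiv.apply_symm_apply]
    omega

noncomputable def permOfWord {σ : ℕ → ℕ} (hσ : Set.BijOn σ (Set.Iio n) (Set.Icc 1 n)) :
    Equiv.Perm (Fin n) :=
  Equiv.ofBijective
    (fun m => ⟨σ m - 1, by have := (hσ.mapsTo m.isLt).2; have := m.isLt; omega⟩) <|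
    Finite.injective_iff_bijective.mp fun m₁ m₂ h => Fin.ext <| hσ.injOn m₁.isLt m₂.isLt <| by
      have := (hσ.mapsTo m₁.isLt).1
      have := (hσ.mapsTo m₂.isLt).1
      have := congrArg Fin.val h
      dsimp only at this
      omega

theorem permOfWord_apply_add_one {σ : ℕ → ℕ} (hσ : Set.BijOn σ (Set.Iio n) (Set.Icc 1 n))
    (m : Fin n) :
    (permOfWord hσ m : ℕ) + 1 = σ m := by
  have := (hσ.mapsTo m.isLt).1
  simp only [permOfWord, Equiv.ofBijective_apply]
  omega

end PermWord

namespace StepMatrix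

variable {n : ℕ}

theorem ext {M N : StepMatrix n} (hq : M.q = N.q) (hp : M.p = N.p)
    (hE : ∀ i j, M.E i j = N.E (Fin.cast hq i) (Fin.cast hp j)) : M = N := by
  obtain ⟨q, p, _, _, E, _⟩ := M
  obtain ⟨q', p', _, _, E', _⟩ := N
  obtain rfl : q = q' := hq
  obtain rfl : p = p' := hp
  obtain rfl : E = E' := funext₂ hE
  rfl

theorem word_bijOn_Iio (M : StepMatrix n) : Set.BijOn M.word (Set.Iio n) (Set.Icc 1 n) := by
  have h := word_bijOn (M := M)
  rwa [q_add_p, Nat.add_sub_cancel] at h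

def ofWord (hn : 1 ≤ n) {σ : ℕ → ℕ} (hσ : Set.BijOn σ (Set.Iio n) (Set.Icc 1 n)) :
    StepMatrix n where
  q := descentCount σ (n - 1) + 1
  p := n - descentCount σ (n - 1)
  hq := Nat.le_add_left 1 _
  hp := by have := descentCount_le σ (n - 1); omega
  E := wordMatrix n σ
  isStep := isStepMatrix_wordMatrix hσ

section OfWord

variable (hn : 1 ≤ n) {σ : ℕ → ℕ} (hσ : Set.BijOn σ (Set.Iio n) (Set.Icc 1 n))

theorem word_ofWord {m : ℕ} (hm : m < n) : (ofWord hn hσ).word m = σ m := by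
  obtain ⟨ij, hdiag, hval⟩ := exists_wordMatrix_cell (σ := σ) hm
  have hne : wordMatrix n σ ij.1 ij.2 ≠ 0 := by
    rw [hval]
    exact Nat.one_le_iff_ne_zero.mp (hσ.mapsTo hm).1
  have := ij.1.isLt
  rw [word, ← eq_diagCell (M := ofWord hn hσ) (ij := ij)
    (by show _ + (descentCount σ (n - 1) + 1 - 1) = _; omega) hne]
  exact hval

theorem ofWord_eq (M : StepMatrix n) (hσM : ∀ t < n, σ t = M.word t) : ofWord hn hσ = M := by
  have hqp := M.q_add_p
  have := M.hq
  have hdesc : ∀ m < n, descentCount σ m = descentCount M.word m :=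
    fun m hm => descentCount_congr fun t ht => hσM t (by omega)
  have hD : descentCount σ (n - 1) = M.q - 1 := by
    rw [hdesc _ (by omega), show n - 1 = M.q + M.p - 2 by omega, descentCount_word_last]
  have hq : (ofWord hn hσ).q = M.q := by show descentCount σ (n - 1) + 1 = M.q; omega
  have hp : (ofWord hn hσ).p = M.p := by show n - descentCount σ (n - 1) = M.p; omega
  refine ext hq hp fun i j => ?_
  have hm := wordMatrix_diag_lt (σ := σ) i j
  set m := (j : ℕ) + descentCount σ (n - 1) - i
  have hrow := diagCell_fst_add_descentCount (M := M) (m := m) (by omega)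
  have hdiag := (diagCell_spec (M := M) (m := m) (by omega)).1
  have hi : (i : ℕ) < descentCount σ (n - 1) + 1 := i.isLt
  rw [← hdesc m hm] at hrow
  show wordMatrix n σ i j = _
  by_cases hc : (i : ℕ) + descentCount σ m = descentCount σ (n - 1)
  · have hcell : M.diagCell m = (Fin.cast hq i, Fin.cast hp j) := by
      ext <;> simp only [Fin.val_cast] <;> omega
    rw [wordMatrix_apply_of_eq hc, hσM m hm, word, hcell]
  · rw [not_not.mp (mt (wordMatrix_ne_zero_iff hσ.mapsTo i j).mp hc)]
    by_contra hne
    have := congrArg (fun ij => (ij.1 : ℕ)) (eq_diagCell (M := M) (m := m)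
      (ij := (Fin.cast hq i, Fin.cast hp j)) (by simp only [Fin.val_cast]; omega) (Ne.symm hne))
    simp only [Fin.val_cast] at this
    omega

end OfWord

noncomputable def equivPerm (hn : 1 ≤ n) : StepMatrix n ≃ Equiv.Perm (Fin n) where
  toFun M := permOfWord M.word_bijOn_Iio
  invFun w := ofWord hn (permWord_bijOn w)
  left_inv M := ofWord_eq hn _ M fun t ht => by
    rw [permWord, dif_pos ht, permOfWord_apply_add_one]
  right_inv w := Equiv.ext fun m => Fin.ext <| Nat.add_right_cancel (m := 1) <| by
    rw [permOfWord_apply_add_one, word_ofWord hn _ m.isLt, permWord, dif_pos m.isLt]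

end StepMatrix

/-- For every `n ≥ 1`, the set of all step matrices with nonzero entries `{1,…,n}`
(taken over all matrix sizes) is in bijective correspondence with the symmetric group
`S_n`; in particular there are exactly `n!` such step matrices. -/
theorem stepMatrix_equiv_perm (n : ℕ) (hn : 1 ≤ n) :
    Nonempty (StepMatrix n ≃ Equiv.Perm (Fin n)) ∧
    Nat.card (StepMatrix n) = Nat.factorial n :=
  ⟨⟨StepMatrix.equivPerm hn⟩, by
    rw [Nat.card_congr (StepMatrix.equivPerm hn), Nat.card_perm, Nat.card_fin]⟩
end

section
/- Let E be a q×p step matrix with nonzero entries {1,…,n}. Then n = p + q − 1, the entries in the lower-left position (q,1) and the upper-right position (1,p) are nonzero, and for each integer c with 1−q ≤ c ≤ p−2, if (i,j) and (i′,j′) denote the unique positions of nonzero entries on the diagonals j−i = c and j′−i′ = c+1 respectively, then either (i′,j′) = (i, j+1) or (i′,j′) = (i−1, j). Hence the positions of the nonzero entries of E form a continuous monotone staircase connecting the lower-left-most and upper-right-most nonzero entries of E. -/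
open Finset

theorem Finset.card_filter_eq_card_of_existsUnique {α β : Type*} [Fintype α] {P : α → Prop}
    [DecidablePred P] (g : α → β) (s : Finset β) (hmaps : ∀ a, P a → g a ∈ s)
    (hunique : ∀ b ∈ s, ∃! a, P a ∧ g a = b) : #{a | P a} = #s := by
  refine card_bij (fun a _ => g a) (fun a ha => hmaps a (mem_filter.mp ha).2) ?_ ?_
  · intro a ha a' ha' h
    obtain ⟨_, -, huniq⟩ := hunique (g a) (hmaps a (mem_filter.mp ha).2)
    exact (huniq a ⟨(mem_filter.mp ha).2, rfl⟩).trans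
      (huniq a' ⟨(mem_filter.mp ha').2, h.symm⟩).symm
  · intro b hb
    obtain ⟨a, ⟨hPa, rfl⟩, -⟩ := hunique b hb
    exact ⟨a, mem_filter.mpr ⟨mem_univ a, hPa⟩, rfl⟩

structure IsStepShape {q p : ℕ} (Z : Fin q → Fin p → Prop) : Prop where
  row_convex : ∀ (i : Fin q) (j₁ j₂ j₃ : Fin p), j₁ ≤ j₂ → j₂ ≤ j₃ → Z i j₁ → Z i j₃ → Z i j₂
  col_convex : ∀ (j : Fin p) (i₁ i₂ i₃ : Fin q), i₁ ≤ i₂ → i₂ ≤ i₃ → Z i₁ j → Z i₃ j → Z i₂ j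
  existsUnique_diag : ∀ c : ℤ, 1 - (q : ℤ) ≤ c → c ≤ (p : ℤ) - 1 →
    ∃! ij : Fin q × Fin p, (ij.2 : ℤ) - ij.1 = c ∧ Z ij.1 ij.2

namespace IsStepShape

variable {q p : ℕ} {Z : Fin q → Fin p → Prop}

theorem card_eq (hZ : IsStepShape Z) [DecidablePred fun ij : Fin q × Fin p => Z ij.1 ij.2] :
    #{ij : Fin q × Fin p | Z ij.1 ij.2} = p + q - 1 := by
  have hcard : #(Icc (1 - (q : ℤ)) (p - 1)) = p + q - 1 := by
    rw [Int.card_Icc]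
    omega
  rw [← hcard]
  refine card_filter_eq_card_of_existsUnique (fun ij => (ij.2 : ℤ) - ij.1) _ ?_ ?_
  · intro ij _
    simp only [mem_Icc]
    omega
  · intro c hc
    rw [mem_Icc] at hc
    simpa only [and_comm] using hZ.existsUnique_diag c hc.1 hc.2

theorem eq_of_diag_eq (hZ : IsStepShape Z) {i i' : Fin q} {j j' : Fin p} (hij : Z i j)
    (hij' : Z i' j') (hdiag : (j : ℤ) - i = j' - i') : i = i' ∧ j = j' := by
  obtain ⟨_, -, huniq⟩ := hZ.existsUnique_diag ((j : ℤ) - i) (by omega) (by omega)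
  exact Prod.ext_iff.mp ((huniq (i, j) ⟨rfl, hij⟩).trans (huniq (i', j') ⟨hdiag.symm, hij'⟩).symm)

theorem exists_of_diag (hZ : IsStepShape Z) {c : ℤ} (hc₁ : 1 - (q : ℤ) ≤ c) (hc₂ : c ≤ p - 1) :
    ∃ (i : Fin q) (j : Fin p), (j : ℤ) - i = c ∧ Z i j := by
  obtain ⟨⟨i, j⟩, h, -⟩ := hZ.existsUnique_diag c hc₁ hc₂
  exact ⟨i, j, h⟩

theorem lowerLeft (hZ : IsStepShape Z) (hq : 0 < q) (hp : 0 < p) :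
    Z ⟨q - 1, by omega⟩ ⟨0, by omega⟩ := by
  obtain ⟨i, j, hd, hij⟩ := hZ.exists_of_diag (c := 1 - q) le_rfl (by omega)
  convert hij using 1 <;> ext <;> simp only <;> omega

theorem upperRight (hZ : IsStepShape Z) (hq : 0 < q) (hp : 0 < p) :
    Z ⟨0, by omega⟩ ⟨p - 1, by omega⟩ := by
  obtain ⟨i, j, hd, hij⟩ := hZ.exists_of_diag (c := p - 1) (by omega) le_rfl
  convert hij using 1 <;> ext <;> simp only <;> omega

theorem le_and_le_of_diag_lt (hZ : IsStepShape Z) {i r : Fin q} {j s : Fin p} (hij : Z i j)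
    (hrs : Z r s) (hlt : (j : ℤ) - i < s - r) : r ≤ i ∧ j ≤ s := by
  generalize hd : (j : ℤ) - i = c at hlt
  have hc : 1 - (q : ℤ) ≤ c := by omega
  induction c, hc using Int.leInduction generalizing i j r s with
  | base => omega
  | succ c hc ih =>
    obtain ⟨i₀, j₀, hd₀, h₀⟩ := hZ.exists_of_diag hc (by omega)
    obtain ⟨hi, hj⟩ := ih h₀ hij hd₀ (by omega)
    obtain ⟨hr, hs⟩ := ih h₀ hrs hd₀ (by omega)
    rcases (by omega : (i = i₀ ∧ (j : ℕ) = j₀ + 1) ∨ ((i : ℕ) + 1 = i₀ ∧ j = j₀))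
      with ⟨rfl, hj'⟩ | ⟨hi', rfl⟩
    · refine ⟨hr, ?_⟩
      by_contra! hsj
      obtain rfl : s = j₀ := by omega
      let i₁ : Fin q := ⟨i - 1, by omega⟩
      have hi₁ : (i₁ : ℕ) = i - 1 := rfl
      have hup : Z i₁ s := hZ.col_convex s r i₁ i (by omega) (by omega) hrs h₀
      have := hZ.eq_of_diag_eq hup hij (by omega)
      omega
    · refine ⟨?_, hs⟩
      by_contra! hri
      obtain rfl : r = i₀ := by omega
      let j₁ : Fin p := ⟨j + 1, by omega⟩
      have hj₁ : (j₁ : ℕ) = j + 1 := rfl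
      have hright : Z r j₁ := hZ.row_convex r j j₁ s (by omega) (by omega) h₀ hrs
      have := hZ.eq_of_diag_eq hright hij (by omega)
      omega

end IsStepShape

namespace IsStepMatrix

variable {n q p : ℕ} {E : Fin q → Fin p → ℕ}

theorem isStepShape (hE : IsStepMatrix n q p E) : IsStepShape fun i j => E i j ≠ 0 :=
  ⟨hE.2.2.1, hE.2.2.2.2.1, hE.2.2.2.2.2.2⟩

theorem card_support (hE : IsStepMatrix n q p E) :
    #{ij : Fin q × Fin p | E ij.1 ij.2 ≠ 0} = n := by
  obtain ⟨hle, hunique, -⟩ := hE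
  refine (card_filter_eq_card_of_existsUnique (fun ij => E ij.1 ij.2) (Icc 1 n) ?_ ?_).trans
    (by simp)
  · intro ij hij
    simpa only [mem_Icc] using ⟨Nat.one_le_iff_ne_zero.mpr hij, hle ij.1 ij.2⟩
  · intro k hk
    rw [mem_Icc] at hk
    obtain ⟨ij, hij, huniq⟩ := hunique k hk.1 hk.2
    exact ⟨ij, ⟨by omega, hij⟩, fun ij' h => huniq ij' h.2⟩

end IsStepMatrix

/-- For a `q × p` step matrix with nonzero entries `{1,…,n}`: `n = p + q - 1`; the
lower-left entry (position `(q,1)`, i.e. `(q-1,0)` in 0-indexing) and the upper-right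
entry (position `(1,p)`, i.e. `(0,p-1)`) are nonzero; and the unique nonzero entries on
consecutive diagonals `j - i = c` and `j' - i' = c + 1` sit at positions related by
`(i',j') = (i, j+1)` or `(i',j') = (i-1, j)`.  Hence the nonzero entries form a
continuous monotone staircase from the lower-left-most to the upper-right-most
nonzero entry. -/
theorem stepMatrix_staircase (n q p : ℕ) (hq : 1 ≤ q) (hp : 1 ≤ p)
    (E : Fin q → Fin p → ℕ) (hE : IsStepMatrix n q p E) :
    n = p + q - 1 ∧
    E ⟨q - 1, by omega⟩ ⟨0, by omega⟩ ≠ 0 ∧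
    E ⟨0, by omega⟩ ⟨p - 1, by omega⟩ ≠ 0 ∧
    (∀ c : ℤ, 1 - (q : ℤ) ≤ c → c ≤ (p : ℤ) - 2 →
      ∀ (i : Fin q) (j : Fin p) (i' : Fin q) (j' : Fin p),
        (j : ℤ) - (i : ℤ) = c → E i j ≠ 0 →
        (j' : ℤ) - (i' : ℤ) = c + 1 → E i' j' ≠ 0 →
        (((i' : ℕ) = (i : ℕ) ∧ (j' : ℕ) = (j : ℕ) + 1) ∨
         ((i' : ℕ) + 1 = (i : ℕ) ∧ (j' : ℕ) = (j : ℕ)))) := by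
  have hZ := hE.isStepShape
  refine ⟨hE.card_support.symm.trans hZ.card_eq, hZ.lowerLeft hq hp, hZ.upperRight hq hp, ?_⟩
  intro c _ _ i j i' j' hd hij hd' hij'
  have := hZ.le_and_le_of_diag_lt hij hij' (by omega)
  omega
end

section
/- For all m, n ≥ 1, the combinatorial join assignment (A, B, (i;j)) ↦ A ∗_{(i;j)} B is a bijection from the set of quadruples consisting of an ordered partition A of {1,…,m} into k blocks, an ordered partition B of {1,…,n} into l blocks, an integer s with max{k,l} ≤ s ≤ k+l, and complementary increasing index sequences (i;j) = (i_1<⋯<i_k ; j_1<⋯<j_l) in {1,…,s} with {i_1,…,i_k} ∪ {j_1,…,j_l} = {1,…,s}, onto the set of all ordered partitions of {1,…,m+n}. In particular, every ordered partition of {1,…,m+n} admits a unique decomposition as a combinatorial join A ∗_{(i;j)} B of an ordered partition of {1,…,m} and an ordered partition of {1,…,n}. -/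
/-- `C : Fin s → Finset (Fin N)` is an ordered partition of `{1,…,N}` into `s` blocks:
the blocks are nonempty, pairwise disjoint, and cover `{1,…,N}`. -/
def IsOrderedPartition {N s : ℕ} (C : Fin s → Finset (Fin N)) : Prop :=
  (∀ r, (C r).Nonempty) ∧
  (∀ r r', r ≠ r' → Disjoint (C r) (C r')) ∧
  (∀ x, ∃ r, x ∈ C r)

/-- The data of a combinatorial join: an ordered partition `A` of `{1,…,m}` into `k`
blocks, an ordered partition `B` of `{1,…,n}` into `l` blocks, an integer `s` with
`max{k,l} ≤ s ≤ k+l`, and increasing index sequences `i_1 < ⋯ < i_k` and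
`j_1 < ⋯ < j_l` in `{1,…,s}` (encoded as strictly monotone maps `ι : Fin k → Fin s`
and `κ : Fin l → Fin s`) whose ranges together cover `{1,…,s}`. -/
structure JoinData (m n : ℕ) where
  k : ℕ
  l : ℕ
  A : Fin k → Finset (Fin m)
  B : Fin l → Finset (Fin n)
  hA : IsOrderedPartition A
  hB : IsOrderedPartition B
  s : ℕ
  hs1 : max k l ≤ s
  hs2 : s ≤ k + l
  ι : Fin k → Fin s
  κ : Fin l → Fin s
  hι : StrictMono ι
  hκ : StrictMono κ
  hcover : ∀ r : Fin s, (∃ t, ι t = r) ∨ (∃ t, κ t = r)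

/-- The blocks of the combinatorial join `A ∗_{(i;j)} B`: the `r`-th block is
`A′_r ∪ (B′_r + m)`, where `A′_{ι t} = A_t` (embedded in the first `m` elements of
`{1,…,m+n}`) and `A′_r = ∅` otherwise, and `B′_{κ t} = B_t + m` and `B′_r = ∅`
otherwise. -/
def joinBlocks {m n : ℕ} (d : JoinData m n) : Fin d.s → Finset (Fin (m + n)) :=
  fun r =>
    ((Finset.univ.filter fun t => d.ι t = r).biUnion fun t =>
        (d.A t).image (Fin.castAdd n)) ∪
    ((Finset.univ.filter fun t => d.κ t = r).biUnion fun t =>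
        (d.B t).image (Fin.natAdd m))

/-!
Read an ordered partition `P` of `{1,…,m+n}` through the two embeddings of `{1,…,m}` and
`{1,…,n}`: the blocks meeting the first `m` elements, listed in increasing order, trace an
ordered partition `A` of `{1,…,m}`, and their positions form the increasing sequence `i`;
likewise the blocks meeting the last `n` elements give `B` and `j`. Every block is nonempty,
so `i` and `j` together cover all positions, and `P = A ∗_{(i;j)} B`. Conversely, in a join
`A ∗_{(i;j)} B` the blocks meeting `{1,…,m}` are exactly those at the positions `i_t`, where
the trace is `A_t`, so the decomposition recovers `(A, B, (i;j))`.
-/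

open Finset

section Trace

variable {M N s : ℕ} (P : Fin s → Finset (Fin N)) (e : Fin M → Fin N)

def blocksMeeting : Finset (Fin s) :=
  univ.filter fun r => ∃ a, e a ∈ P r

def meetingIndex : Fin #(blocksMeeting P e) ↪o Fin s :=
  (blocksMeeting P e).orderEmbOfFin rfl

def traceBlocks : Fin #(blocksMeeting P e) → Finset (Fin M) :=
  fun t => univ.filter fun a => e a ∈ P (meetingIndex P e t)

variable {P e}

lemma mem_range_meetingIndex {r : Fin s} :
    r ∈ Set.range (meetingIndex P e) ↔ r ∈ blocksMeeting P e := by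
  rw [meetingIndex, range_orderEmbOfFin, mem_coe]

lemma exists_meetingIndex_eq_and_mem_traceBlocks {r : Fin s} {a : Fin M} :
    (∃ t, meetingIndex P e t = r ∧ a ∈ traceBlocks P e t) ↔ e a ∈ P r := by
  constructor
  · rintro ⟨t, rfl, ha⟩
    exact (mem_filter.1 ha).2
  · intro ha
    obtain ⟨t, rfl⟩ := mem_range_meetingIndex.2 (mem_filter.2 ⟨mem_univ r, a, ha⟩)
    exact ⟨t, rfl, mem_filter.2 ⟨mem_univ a, ha⟩⟩

lemma card_blocksMeeting_le : #(blocksMeeting P e) ≤ s :=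
  (card_le_univ _).trans_eq (Fintype.card_fin s)

lemma IsOrderedPartition.traceBlocks (hP : IsOrderedPartition P) :
    IsOrderedPartition (traceBlocks P e) := by
  refine ⟨fun t => ?_, fun t t' htt' => ?_, fun a => ?_⟩
  · obtain ⟨a, ha⟩ := (mem_filter.1 (orderEmbOfFin_mem (blocksMeeting P e) rfl t)).2
    exact ⟨a, mem_filter.2 ⟨mem_univ a, ha⟩⟩
  · refine disjoint_left.2 fun a ha ha' => ?_
    exact disjoint_left.1 (hP.2.1 _ _ ((meetingIndex P e).injective.ne htt'))
      (mem_filter.1 ha).2 (mem_filter.1 ha').2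
  · obtain ⟨r, hr⟩ := hP.2.2 (e a)
    obtain ⟨t, -, ha⟩ := exists_meetingIndex_eq_and_mem_traceBlocks.2 hr
    exact ⟨t, ha⟩

variable {k : ℕ} {ι : Fin k → Fin s} {A : Fin k → Finset (Fin M)}
  (hA : ∀ t, (A t).Nonempty) (hPA : ∀ r a, e a ∈ P r ↔ ∃ t, ι t = r ∧ a ∈ A t)
include hA hPA

lemma blocksMeeting_eq_image : blocksMeeting P e = univ.image ι := by
  ext r
  simp only [blocksMeeting, mem_filter, mem_univ, true_and, mem_image, hPA]
  constructor
  · rintro ⟨a, t, ht, -⟩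
    exact ⟨t, ht⟩
  · rintro ⟨t, ht⟩
    obtain ⟨a, ha⟩ := hA t
    exact ⟨a, t, ht, ha⟩

variable (hι : StrictMono ι)
include hι

lemma card_blocksMeeting_eq : #(blocksMeeting P e) = k := by
  rw [blocksMeeting_eq_image hA hPA, card_image_of_injective _ hι.injective, card_univ,
    Fintype.card_fin]

lemma meetingIndex_eq (t : Fin #(blocksMeeting P e)) :
    meetingIndex P e t = ι (Fin.cast (card_blocksMeeting_eq hA hPA hι) t) := by
  have hmem : ∀ t, ι t ∈ blocksMeeting P e := by
    rw [blocksMeeting_eq_image hA hPA]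
    exact fun t => mem_image_of_mem ι (mem_univ t)
  have h := orderEmbOfFin_unique rfl (fun t => hmem _)
    (hι.comp (Fin.cast_strictMono (card_blocksMeeting_eq hA hPA hι)))
  exact (congrFun h t).symm

lemma traceBlocks_eq (t : Fin #(blocksMeeting P e)) :
    traceBlocks P e t = A (Fin.cast (card_blocksMeeting_eq hA hPA hι) t) := by
  ext a
  simp only [traceBlocks, mem_filter, mem_univ, true_and, meetingIndex_eq hA hPA hι, hPA,
    hι.injective.eq_iff, exists_eq_left]

end Trace

variable {m n : ℕ}

lemma Fin.castAdd_ne_natAdd (a : Fin m) (b : Fin n) : Fin.castAdd n a ≠ Fin.natAdd m b := by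
  simp only [ne_eq, Fin.ext_iff, Fin.val_castAdd, Fin.val_natAdd]
  omega

lemma mem_joinBlocks_castAdd {d : JoinData m n} {r : Fin d.s} {a : Fin m} :
    Fin.castAdd n a ∈ joinBlocks d r ↔ ∃ t, d.ι t = r ∧ a ∈ d.A t := by
  simp [joinBlocks, (Fin.castAdd_ne_natAdd _ _).symm]

lemma mem_joinBlocks_natAdd {d : JoinData m n} {r : Fin d.s} {b : Fin n} :
    Fin.natAdd m b ∈ joinBlocks d r ↔ ∃ t, d.κ t = r ∧ b ∈ d.B t := by
  simp [joinBlocks, Fin.castAdd_ne_natAdd]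

lemma joinBlocks_isOrderedPartition (d : JoinData m n) : IsOrderedPartition (joinBlocks d) := by
  refine ⟨fun r => ?_, fun r r' hrr' => disjoint_left.2 fun x hx hx' => ?_, fun x => ?_⟩
  · rcases d.hcover r with ⟨t, rfl⟩ | ⟨t, rfl⟩
    · obtain ⟨a, ha⟩ := d.hA.1 t
      exact ⟨_, mem_joinBlocks_castAdd.2 ⟨t, rfl, ha⟩⟩
    · obtain ⟨b, hb⟩ := d.hB.1 t
      exact ⟨_, mem_joinBlocks_natAdd.2 ⟨t, rfl, hb⟩⟩
  · induction x using Fin.addCases with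
    | left a =>
      obtain ⟨t, rfl, ha⟩ := mem_joinBlocks_castAdd.1 hx
      obtain ⟨t', rfl, ha'⟩ := mem_joinBlocks_castAdd.1 hx'
      exact disjoint_left.1 (d.hA.2.1 t t' (ne_of_apply_ne d.ι hrr')) ha ha'
    | right b =>
      obtain ⟨t, rfl, hb⟩ := mem_joinBlocks_natAdd.1 hx
      obtain ⟨t', rfl, hb'⟩ := mem_joinBlocks_natAdd.1 hx'
      exact disjoint_left.1 (d.hB.2.1 t t' (ne_of_apply_ne d.κ hrr')) hb hb'
  · induction x using Fin.addCases with
    | left a =>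
      obtain ⟨t, ha⟩ := d.hA.2.2 a
      exact ⟨d.ι t, mem_joinBlocks_castAdd.2 ⟨t, rfl, ha⟩⟩
    | right b =>
      obtain ⟨t, hb⟩ := d.hB.2.2 b
      exact ⟨d.κ t, mem_joinBlocks_natAdd.2 ⟨t, rfl, hb⟩⟩

lemma IsOrderedPartition.mem_blocksMeeting_castAdd_or_natAdd {s : ℕ}
    {P : Fin s → Finset (Fin (m + n))} (hP : IsOrderedPartition P) (r : Fin s) :
    r ∈ blocksMeeting P (Fin.castAdd n) ∨ r ∈ blocksMeeting P (Fin.natAdd m) := by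
  obtain ⟨x, hx⟩ := hP.1 r
  induction x using Fin.addCases with
  | left a => exact .inl (mem_filter.2 ⟨mem_univ r, a, hx⟩)
  | right b => exact .inr (mem_filter.2 ⟨mem_univ r, b, hx⟩)

lemma IsOrderedPartition.le_card_blocksMeeting_add {s : ℕ}
    {P : Fin s → Finset (Fin (m + n))} (hP : IsOrderedPartition P) :
    s ≤ #(blocksMeeting P (Fin.castAdd n)) + #(blocksMeeting P (Fin.natAdd m)) :=
  calc s = #(univ : Finset (Fin s)) := (card_fin s).symm
    _ ≤ #(blocksMeeting P (Fin.castAdd n) ∪ blocksMeeting P (Fin.natAdd m)) :=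
      card_le_card fun r _ => mem_union.2 (hP.mem_blocksMeeting_castAdd_or_natAdd r)
    _ ≤ _ := card_union_le _ _

def decompose (P : Σ s, Fin s → Finset (Fin (m + n))) (hP : IsOrderedPartition P.2) :
    JoinData m n where
  k := #(blocksMeeting P.2 (Fin.castAdd n))
  l := #(blocksMeeting P.2 (Fin.natAdd m))
  A := traceBlocks P.2 (Fin.castAdd n)
  B := traceBlocks P.2 (Fin.natAdd m)
  hA := hP.traceBlocks
  hB := hP.traceBlocks
  s := P.1
  hs1 := max_le card_blocksMeeting_le card_blocksMeeting_le
  hs2 := hP.le_card_blocksMeeting_add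
  ι := meetingIndex P.2 (Fin.castAdd n)
  κ := meetingIndex P.2 (Fin.natAdd m)
  hι := (meetingIndex _ _).strictMono
  hκ := (meetingIndex _ _).strictMono
  hcover r := (hP.mem_blocksMeeting_castAdd_or_natAdd r).imp mem_range_meetingIndex.2
    mem_range_meetingIndex.2

lemma joinBlocks_decompose (P : Σ s, Fin s → Finset (Fin (m + n)))
    (hP : IsOrderedPartition P.2) :
    (⟨(decompose P hP).s, joinBlocks (decompose P hP)⟩ : Σ s, Fin s → Finset (Fin (m + n))) =
      P := by
  obtain ⟨s, P⟩ := P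
  refine congrArg (Sigma.mk s) (funext fun r => Finset.ext fun x => ?_)
  induction x using Fin.addCases with
  | left a => exact mem_joinBlocks_castAdd.trans exists_meetingIndex_eq_and_mem_traceBlocks
  | right b => exact mem_joinBlocks_natAdd.trans exists_meetingIndex_eq_and_mem_traceBlocks

lemma JoinData.ext {d d' : JoinData m n} (hk : d.k = d'.k) (hl : d.l = d'.l) (hs : d.s = d'.s)
    (hA : ∀ t, d.A t = d'.A (Fin.cast hk t)) (hB : ∀ t, d.B t = d'.B (Fin.cast hl t))
    (hι : ∀ t, (d.ι t : ℕ) = d'.ι (Fin.cast hk t)) (hκ : ∀ t, (d.κ t : ℕ) = d'.κ (Fin.cast hl t)) :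
    d = d' := by
  cases d
  cases d'
  dsimp only at hk hl hs
  subst hk hl hs
  congr
  exacts [funext hA, funext hB, funext fun t => Fin.ext (hι t), funext fun t => Fin.ext (hκ t)]

lemma decompose_joinBlocks (d : JoinData m n) :
    decompose ⟨d.s, joinBlocks d⟩ (joinBlocks_isOrderedPartition d) = d :=
  have hPA := fun r a => mem_joinBlocks_castAdd (d := d) (r := r) (a := a)
  have hPB := fun r b => mem_joinBlocks_natAdd (d := d) (r := r) (b := b)
  JoinData.ext (card_blocksMeeting_eq d.hA.1 hPA d.hι) (card_blocksMeeting_eq d.hB.1 hPB d.hκ) rfl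
    (traceBlocks_eq d.hA.1 hPA d.hι) (traceBlocks_eq d.hB.1 hPB d.hκ)
    (fun t => congrArg Fin.val (meetingIndex_eq d.hA.1 hPA d.hι t))
    (fun t => congrArg Fin.val (meetingIndex_eq d.hB.1 hPB d.hκ t))

theorem combinatorialJoin_bijective_general (m n : ℕ) :
    Set.BijOn
      (fun d : JoinData m n =>
        (⟨d.s, joinBlocks d⟩ : Σ s : ℕ, Fin s → Finset (Fin (m + n))))
      Set.univ
      {P : Σ s : ℕ, Fin s → Finset (Fin (m + n)) | IsOrderedPartition P.2} := by
  refine ⟨fun d _ => joinBlocks_isOrderedPartition d, fun d _ d' _ h => ?_,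
    fun P hP => ⟨decompose P hP, Set.mem_univ _, joinBlocks_decompose P hP⟩⟩
  rw [← decompose_joinBlocks d, ← decompose_joinBlocks d']
  congr 1

/-- For all `m, n ≥ 1`, the combinatorial join assignment
`(A, B, (i;j)) ↦ A ∗_{(i;j)} B` is a bijection from the set of such quadruples onto
the set of all ordered partitions of `{1,…,m+n}`; in particular every ordered
partition of `{1,…,m+n}` decomposes uniquely as a combinatorial join of an ordered
partition of `{1,…,m}` and an ordered partition of `{1,…,n}`. -/
theorem combinatorialJoin_bijective (m n : ℕ) (hm : 1 ≤ m) (hn : 1 ≤ n) :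
    Set.BijOn
      (fun d : JoinData m n =>
        (⟨d.s, joinBlocks d⟩ : Σ s : ℕ, Fin s → Finset (Fin (m + n))))
      Set.univ
      {P : Σ s : ℕ, Fin s → Finset (Fin (m + n)) | IsOrderedPartition P.2} :=
  combinatorialJoin_bijective_general m n
end

section
/- Let A be a q×s bisequence matrix with column leaf sequence y = (y_1,…,y_q) and row leaf sequence v = (v_1,…,v_s), and let B be a t×p bisequence matrix with column leaf sequence u = (u_1,…,u_t) and row leaf sequence x = (x_1,…,x_p). Then (A,B) is a block transverse pair if and only if p = v_1 + ⋯ + v_s and q = u_1 + ⋯ + u_t. -/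
/-- A `q × p` bidegree matrix: every entry `(out, in)` consists of positive integers. -/
def IsBidegMatrix {q p : ℕ} (E : Fin q → Fin p → ℕ × ℕ) : Prop :=
  ∀ i j, 1 ≤ (E i j).1 ∧ 1 ≤ (E i j).2

/-- `(A, B)` is a block transverse pair (BTP): there is a partition of the rows of the
`q × s` matrix `A` into `t` consecutive nonempty groups (the fibers of a monotone
surjection `rowGrp : Fin q → Fin t`) and of the columns of the `t × p` matrix `B` into
`s` consecutive nonempty groups (the fibers of a monotone surjection
`colGrp : Fin p → Fin s`) such that for all `i, l` the `l`-th column of `A` restricted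
to the `i`-th row group and the `i`-th row of `B` restricted to the `l`-th column
group form a transverse pair: the in-degrees of the former all equal the size `p_l` of
the `l`-th column group, and the out-degrees of the latter all equal the size `q_i` of
the `i`-th row group. -/
def IsBTP {q s t p : ℕ} (A : Fin q → Fin s → ℕ × ℕ) (B : Fin t → Fin p → ℕ × ℕ) :
    Prop :=
  ∃ (rowGrp : Fin q → Fin t) (colGrp : Fin p → Fin s),
    Monotone rowGrp ∧ Function.Surjective rowGrp ∧
    Monotone colGrp ∧ Function.Surjective colGrp ∧
    (∀ (i : Fin t) (l : Fin s) (r : Fin q) (c : Fin p),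
      rowGrp r = i → colGrp c = l →
      (A r l).2 = (Finset.univ.filter fun c' => colGrp c' = l).card ∧
      (B i c).1 = (Finset.univ.filter fun r' => rowGrp r' = i).card)

lemma card_val_interval {p : ℕ} (a b : ℕ) (hb : b ≤ p) :
    (Finset.univ.filter fun c : Fin p => a ≤ (c : ℕ) ∧ (c : ℕ) < b).card = b - a := by
  have h : ∀ m ∈ Finset.Ico a b, m < p := fun m hm =>
    lt_of_lt_of_le (Finset.mem_Ico.mp hm).2 hb
  have : (Finset.univ.filter fun c : Fin p => a ≤ (c : ℕ) ∧ (c : ℕ) < b) =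
      (Finset.Ico a b).attachFin h := by
    ext c
    simp [Finset.mem_attachFin, Finset.mem_Ico]
  rw [this, Finset.card_attachFin, Nat.card_Ico]

lemma exists_grp {p s : ℕ} (hs : 1 ≤ s) (f : Fin s → ℕ) (hf : ∀ l, 1 ≤ f l)
    (hp : p = ∑ l, f l) :
    ∃ g : Fin p → Fin s, Monotone g ∧ Function.Surjective g ∧
      ∀ l, (Finset.univ.filter fun c => g c = l).card = f l := by
  obtain ⟨s', rfl⟩ : ∃ s', s = s' + 1 := ⟨s - 1, (Nat.succ_pred_eq_of_pos hs).symm⟩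
  set N : Fin (s' + 1) → ℕ := fun l => ∑ j ∈ Finset.Iic l, f j with hN
  set P : Fin (s' + 1) → ℕ := fun l => ∑ j ∈ Finset.Iio l, f j with hP
  have hNP : ∀ l, N l = P l + f l := by
    intro l
    have hins : Finset.Iic l = insert l (Finset.Iio l) := by
      ext j; simp [Finset.mem_Iic, Finset.mem_Iio, le_iff_lt_or_eq, or_comm]
    simp only [hN, hP]
    rw [hins, Finset.sum_insert (by simp)]
    ring
  have hNmono : Monotone N := fun a b hab =>
    Finset.sum_le_sum_of_subset (Finset.Iic_subset_Iic.mpr hab)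
  have hNlast : N (Fin.last s') = p := by
    simp only [hN, hp]
    apply Finset.sum_congr _ (fun _ _ => rfl)
    ext j; simp [Fin.le_last]
  have hNle : ∀ l, N l ≤ p := fun l => hNlast ▸ hNmono (Fin.le_last l)
  have hne : ∀ c : Fin p, (Finset.univ.filter fun l => (c : ℕ) < N l).Nonempty := by
    intro c
    refine ⟨Fin.last s', ?_⟩
    simp only [Finset.mem_filter, Finset.mem_univ, true_and]
    rw [hNlast]; exact c.isLt
  set g : Fin p → Fin (s' + 1) :=
    fun c => (Finset.univ.filter fun l => (c : ℕ) < N l).min' (hne c) with hg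
  have hgmem : ∀ c : Fin p, (c : ℕ) < N (g c) := by
    intro c
    have := Finset.min'_mem _ (hne c)
    simpa using this
  have hgmin : ∀ (c : Fin p) (l : Fin (s' + 1)), (c : ℕ) < N l → g c ≤ l := fun c l h =>
    Finset.min'_le _ _ (by simpa using h)
  have hchar : ∀ (c : Fin p) (l : Fin (s' + 1)),
      g c = l ↔ P l ≤ (c : ℕ) ∧ (c : ℕ) < N l := by
    intro c l
    constructor
    · rintro rfl
      refine ⟨?_, hgmem c⟩
      by_contra h
      push_neg at h
      have hne' : (Finset.Iio (g c)).Nonempty := by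
        by_contra he
        rw [Finset.not_nonempty_iff_eq_empty] at he
        simp only [hP, he, Finset.sum_empty] at h
        omega
      set l' := (Finset.Iio (g c)).max' hne' with hl'
      have hl'lt : l' < g c := Finset.mem_Iio.mp (Finset.max'_mem _ hne')
      have hsub : Finset.Iio (g c) ⊆ Finset.Iic l' := fun j hj =>
        Finset.mem_Iic.mpr (Finset.le_max' _ _ hj)
      have h2 : P (g c) ≤ N l' := Finset.sum_le_sum_of_subset hsub
      have h3 : (c : ℕ) < N l' := lt_of_lt_of_le h h2
      exact absurd (hgmin c l' h3) (not_le.mpr hl'lt)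
    · rintro ⟨h1, h2⟩
      have hle : g c ≤ l := hgmin c l h2
      rcases lt_or_eq_of_le hle with hlt | heq
      · exfalso
        have hsub : Finset.Iic (g c) ⊆ Finset.Iio l := fun j hj =>
          Finset.mem_Iio.mpr (lt_of_le_of_lt (Finset.mem_Iic.mp hj) hlt)
        have h3 : N (g c) ≤ P l := Finset.sum_le_sum_of_subset hsub
        exact absurd (lt_of_lt_of_le (hgmem c) h3) (not_lt.mpr h1)
      · exact heq
  refine ⟨g, ?_, ?_, ?_⟩
  · intro c c' hcc
    apply Finset.le_min'
    intro l hl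
    simp only [Finset.mem_filter, Finset.mem_univ, true_and] at hl
    exact hgmin c l (lt_of_le_of_lt (by exact_mod_cast hcc) hl)
  · intro l
    have h1 : P l < N l := by have := hf l; have := hNP l; omega
    refine ⟨⟨P l, lt_of_lt_of_le h1 (hNle l)⟩, ?_⟩
    rw [hchar]
    exact ⟨le_refl _, h1⟩
  · intro l
    have heq : (Finset.univ.filter fun c => g c = l) =
        (Finset.univ.filter fun c : Fin p => P l ≤ (c : ℕ) ∧ (c : ℕ) < N l) := by
      ext c
      simp only [Finset.mem_filter, Finset.mem_univ, true_and]
      exact hchar c l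
    rw [heq, card_val_interval _ _ (hNle l)]
    have := hNP l; omega

/-- Let `A` be a `q × s` bisequence matrix with column leaf sequence `y` and row leaf
sequence `v`, and let `B` be a `t × p` bisequence matrix with column leaf sequence `u`
and row leaf sequence `x`.  Then `(A, B)` is a block transverse pair if and only if
`p = v_1 + ⋯ + v_s` and `q = u_1 + ⋯ + u_t`. -/
theorem isBTP_iff_sums {q s t p : ℕ} (hq : 1 ≤ q) (hs : 1 ≤ s) (ht : 1 ≤ t)
    (hp : 1 ≤ p)
    (A : Fin q → Fin s → ℕ × ℕ) (B : Fin t → Fin p → ℕ × ℕ)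
    (hApos : IsBidegMatrix A) (hBpos : IsBidegMatrix B)
    (y : Fin q → ℕ) (v : Fin s → ℕ) (u : Fin t → ℕ) (x : Fin p → ℕ)
    (hAy : ∀ i j, (A i j).1 = y i) (hAv : ∀ i j, (A i j).2 = v j)
    (hBu : ∀ i j, (B i j).1 = u i) (hBx : ∀ i j, (B i j).2 = x j) :
    IsBTP A B ↔ (p = ∑ j, v j ∧ q = ∑ i, u i) := by
  constructor
  · rintro ⟨rowGrp, colGrp, hrm, hrs, hcm, hcs, hT⟩
    have r0 : Fin q := ⟨0, hq⟩
    have c0 : Fin p := ⟨0, hp⟩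
    constructor
    · have hcard : p = ∑ l : Fin s, (Finset.univ.filter fun c => colGrp c = l).card := by
        conv_lhs => rw [← Fintype.card_fin p]
        rw [← Finset.card_univ]
        exact Finset.card_eq_sum_card_fiberwise (fun c _ => Finset.mem_univ _)
      refine hcard.trans (Finset.sum_congr rfl ?_)
      intro l _
      obtain ⟨c, hc⟩ := hcs l
      have h := (hT (rowGrp r0) l r0 c rfl hc).1
      rw [hAv r0 l] at h
      exact h.symm
    · have hcard : q = ∑ i : Fin t, (Finset.univ.filter fun r => rowGrp r = i).card := by
        conv_lhs => rw [← Fintype.card_fin q]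
        rw [← Finset.card_univ]
        exact Finset.card_eq_sum_card_fiberwise (fun r _ => Finset.mem_univ _)
      refine hcard.trans (Finset.sum_congr rfl ?_)
      intro i _
      obtain ⟨r, hr⟩ := hrs i
      have h := (hT i (colGrp c0) r c0 hr rfl).2
      rw [hBu i c0] at h
      exact h.symm
  · rintro ⟨hpv, hqu⟩
    have hvpos : ∀ l, 1 ≤ v l := fun l => hAv ⟨0, hq⟩ l ▸ (hApos ⟨0, hq⟩ l).2
    have hupos : ∀ i, 1 ≤ u i := fun i => hBu i ⟨0, hp⟩ ▸ (hBpos i ⟨0, hp⟩).1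
    obtain ⟨colGrp, hcm, hcs, hcf⟩ := exists_grp hs v hvpos hpv
    obtain ⟨rowGrp, hrm, hrs, hrf⟩ := exists_grp ht u hupos hqu
    refine ⟨rowGrp, colGrp, hrm, hrs, hcm, hcs, ?_⟩
    intro i l r c _ _
    constructor
    · rw [hAv r l, hcf l]
    · rw [hBu i c, hrf i]
end

section
/- Let A be a q×s bisequence matrix with column leaf sequence y = (y_1,…,y_q) and row leaf sequence v = (v_1,…,v_s), let B be a t×p bisequence matrix with column leaf sequence u = (u_1,…,u_t) and row leaf sequence x = (x_1,…,x_p), and let C be a t′×p′ bisequence matrix with column leaf sequence w and row leaf sequence z. If (A,B) is a block transverse pair, define the product shape A·B to be the t×s bisequence matrix shape whose row leaf sequence is (X_1,…,X_s), where X_l is the sum of the x_j over the l-th consecutive group of v_l columns of B, and whose column leaf sequence is (Y_1,…,Y_t), where Y_i is the sum of the y over the i-th consecutive group of u_i rows of A; define B·C analogously when (B,C) is a block transverse pair. Then: (1) if (A,B) is a block transverse pair, then (A·B, C) is a block transverse pair if and only if (B, C) is; and (2) if (B,C) is a block transverse pair, then (A, B·C) is a block transverse pair if and only if (A, B) is.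 -/
/-- Given block sizes `v : Fin s → ℕ` and a sequence `x : Fin p → ℕ`, `groupSum v x l`
is the sum of the `x_j` over the `l`-th consecutive group of `v_l` indices, i.e. over
those `j` with `v_1 + ⋯ + v_{l-1} ≤ j < v_1 + ⋯ + v_l` (0-indexed). -/
def groupSum {s p : ℕ} (v : Fin s → ℕ) (x : Fin p → ℕ) (l : Fin s) : ℕ :=
  ∑ j ∈ Finset.univ.filter (fun j : Fin p =>
      (∑ l' ∈ Finset.univ.filter (fun l' => l' < l), v l') ≤ (j : ℕ) ∧
      (j : ℕ) < (∑ l' ∈ Finset.univ.filter (fun l' => l' < l), v l') + v l),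
    x j

open Finset

lemma val_lt_card_filter_iff_of_antitone {n : ℕ} {P : Fin n → Prop} [DecidablePred P]
    (hP : Antitone P) (j : Fin n) : (j : ℕ) < #{i | P i} ↔ P j := by
  refine ⟨fun hj => ?_, fun hPj => ?_⟩
  · by_contra hPj
    have hsub : ({i | P i} : Finset (Fin n)) ⊆ Iio j := fun i hi =>
      mem_Iio.2 (lt_of_not_ge fun hji => hPj (hP hji (mem_filter.1 hi).2))
    have := card_le_card hsub
    rw [Fin.card_Iio] at this
    omega
  · have hsub : Iic j ⊆ ({i | P i} : Finset (Fin n)) := fun i hi =>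
      mem_filter.2 ⟨mem_univ _, hP (mem_Iic.1 hi) hPj⟩
    have := card_le_card hsub
    rw [Fin.card_Iic] at this
    omega

section PrefixSum

variable {k : ℕ} (a : Fin k → ℕ)

def prefixSum (i : ℕ) : ℕ :=
  ∑ l ∈ ({l | (l : ℕ) < i} : Finset (Fin k)), a l

lemma prefixSum_mono : Monotone (prefixSum a) := fun _ _ h =>
  sum_le_sum_of_subset fun l hl => by simp only [mem_filter, mem_univ, true_and] at hl ⊢; omega

lemma prefixSum_succ (l : Fin k) : prefixSum a (l + 1) = prefixSum a l + a l := by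
  have hinsert : ({l' | (l' : ℕ) < l + 1} : Finset (Fin k)) =
      insert l ({l' | (l' : ℕ) < l} : Finset (Fin k)) := by
    ext l'
    simp only [mem_filter, mem_univ, true_and, mem_insert, Fin.ext_iff]
    omega
  rw [prefixSum, prefixSum, hinsert, sum_insert (by simp), add_comm]

lemma prefixSum_le_sum (i : ℕ) : prefixSum a i ≤ ∑ l, a l :=
  sum_le_sum_of_subset (filter_subset _ _)

lemma prefixSum_of_le {i : ℕ} (h : k ≤ i) : prefixSum a i = ∑ l, a l := by
  rw [prefixSum, filter_true_of_mem fun l _ => by omega]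

lemma card_filter_val_lt_eq_prefixSum {n : ℕ} (f : Fin n → Fin k) (i : ℕ) :
    #{j | (f j : ℕ) < i} = prefixSum (fun l => #{j | f j = l}) i := by
  rw [prefixSum, sum_card_fiberwise_eq_card_filter]
  simp only [mem_filter, mem_univ, true_and]

end PrefixSum

/-- `f j` is the index of the block containing `j` when `Fin n` is cut into consecutive
blocks of sizes `a`. -/
def IsBlockIndex {n k : ℕ} (a : Fin k → ℕ) (f : Fin n → Fin k) : Prop :=
  ∀ j i, (f j : ℕ) < i ↔ (j : ℕ) < prefixSum a i

namespace IsBlockIndex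

variable {n k : ℕ} {a : Fin k → ℕ} {f : Fin n → Fin k} (h : IsBlockIndex a f)
include h

lemma monotone : Monotone f := fun j j' hjj' => by
  have hj' := (h j' (f j' + 1)).1 (Nat.lt_succ_self _)
  have hj := (h j (f j' + 1)).2 (lt_of_le_of_lt hjj' hj')
  exact Fin.le_iff_val_le_val.2 (by omega)

lemma filter_eq (l : Fin k) :
    ({j | f j = l} : Finset (Fin n)) =
      ({j | prefixSum a l ≤ j ∧ (j : ℕ) < prefixSum a l + a l} : Finset (Fin n)) := by
  ext j
  simp only [mem_filter, mem_univ, true_and, ← prefixSum_succ, ← not_lt, ← h j, Fin.ext_iff]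
  omega

lemma card_filter_eq (hsum : ∑ l, a l = n) (l : Fin k) : #{j | f j = l} = a l := by
  have hpre (i : ℕ) : prefixSum (fun l => #{j | f j = l}) i = prefixSum a i := by
    rw [← card_filter_val_lt_eq_prefixSum, filter_congr fun j _ => h j i, Fin.card_filter_val_lt]
    exact min_eq_right (hsum ▸ prefixSum_le_sum a i)
  have := hpre (l + 1)
  rw [prefixSum_succ, prefixSum_succ, hpre l] at this
  omega

lemma surjective (hpos : ∀ l, 0 < a l) (hsum : ∑ l, a l = n) : Function.Surjective f := by
  intro l
  obtain ⟨j, hj⟩ := card_pos.1 ((h.card_filter_eq hsum l).trans_gt (hpos l))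
  exact ⟨j, (mem_filter.1 hj).2⟩

end IsBlockIndex

lemma exists_isBlockIndex {n k : ℕ} (a : Fin k → ℕ) (hsum : ∑ l, a l = n) :
    ∃ f : Fin n → Fin k, IsBlockIndex a f := by
  -- `f j` is the number of blocks that end at or before `j`.
  have hcount (j : Fin n) (l : Fin k) :
      (l : ℕ) < #{l' : Fin k | prefixSum a (l' + 1) ≤ j} ↔ prefixSum a (l + 1) ≤ j :=
    val_lt_card_filter_iff_of_antitone
      (fun _ _ hll' hj => (prefixSum_mono a (by simpa using hll')).trans hj) l
  have hlt (j : Fin n) : #{l' : Fin k | prefixSum a (l' + 1) ≤ j} < k := by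
    have hk : 0 < k := Nat.pos_of_ne_zero fun hk => by
      subst hk
      simp only [univ_eq_empty, sum_empty] at hsum
      exact (hsum ▸ j).elim0
    by_contra hge
    have := (hcount j ⟨k - 1, by omega⟩).1 (by simp only; omega)
    rw [show k - 1 + 1 = k by omega, prefixSum_of_le a le_rfl, hsum] at this
    omega
  refine ⟨fun j => ⟨_, hlt j⟩, fun j i => ?_⟩
  rcases i with _ | m
  · simp [prefixSum]
  · by_cases hm : m < k
    · have := hcount j ⟨m, hm⟩
      simp only at this ⊢
      omega
    · rw [prefixSum_of_le a (by omega), hsum]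
      have := hlt j
      simp only
      omega

def HasConsecutiveBlocks {k : ℕ} (n : ℕ) (a : Fin k → ℕ) : Prop :=
  ∃ f : Fin n → Fin k, Monotone f ∧ Function.Surjective f ∧ ∀ l, #{j | f j = l} = a l

lemma hasConsecutiveBlocks_iff {n k : ℕ} {a : Fin k → ℕ} :
    HasConsecutiveBlocks n a ↔ (∀ l, 0 < a l) ∧ ∑ l, a l = n := by
  constructor
  · rintro ⟨f, -, hsurj, hcard⟩
    refine ⟨fun l => ?_, ?_⟩
    · obtain ⟨j, rfl⟩ := hsurj l
      exact hcard (f j) ▸ card_pos.2 ⟨j, by simp⟩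
    · simp_rw [← hcard, sum_card_fiberwise_eq_card_filter]
      simp
  · rintro ⟨hpos, hsum⟩
    obtain ⟨f, hf⟩ := exists_isBlockIndex a hsum
    exact ⟨f, hf.monotone, hf.surjective hpos hsum, hf.card_filter_eq hsum⟩

lemma IsBlockIndex.groupSum_eq {p s : ℕ} {v : Fin s → ℕ} {f : Fin p → Fin s}
    (h : IsBlockIndex v f) (x : Fin p → ℕ) (l : Fin s) :
    groupSum v x l = ∑ j with f j = l, x j := by
  rw [h.filter_eq]
  rfl

lemma hasConsecutiveBlocks_groupSum_iff {n p s : ℕ} {v : Fin s → ℕ} {x : Fin p → ℕ}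
    (hv : HasConsecutiveBlocks p v) (hx : ∀ j, 0 < x j) :
    HasConsecutiveBlocks n (groupSum v x) ↔ HasConsecutiveBlocks n x := by
  obtain ⟨hvpos, hvsum⟩ := hasConsecutiveBlocks_iff.1 hv
  obtain ⟨f, hf⟩ := exists_isBlockIndex v hvsum
  have hpos (l : Fin s) : 0 < groupSum v x l := by
    obtain ⟨j, rfl⟩ := hf.surjective hvpos hvsum l
    rw [hf.groupSum_eq]
    exact sum_pos (fun j _ => hx j) ⟨j, by simp⟩
  have htotal : ∑ l, groupSum v x l = ∑ j, x j := by
    simp_rw [hf.groupSum_eq]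
    exact sum_fiberwise _ _ _
  simp only [hasConsecutiveBlocks_iff, hpos, hx, htotal, implies_true, true_and]

lemma isBTP_iff {q s t p : ℕ} (hq : 0 < q) (hp : 0 < p)
    (A : Fin q → Fin s → ℕ × ℕ) (B : Fin t → Fin p → ℕ × ℕ) {u : Fin t → ℕ} {v : Fin s → ℕ}
    (hAv : ∀ i j, (A i j).2 = v j) (hBu : ∀ i j, (B i j).1 = u i) :
    IsBTP A B ↔ HasConsecutiveBlocks q u ∧ HasConsecutiveBlocks p v := by
  constructor
  · rintro ⟨rowGrp, colGrp, hrow, hrow', hcol, hcol', hsizes⟩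
    refine ⟨⟨rowGrp, hrow, hrow', fun i => ?_⟩, ⟨colGrp, hcol, hcol', fun l => ?_⟩⟩
    · obtain ⟨r, hr⟩ := hrow' i
      rw [← hBu i ⟨0, hp⟩, (hsizes i _ r ⟨0, hp⟩ hr rfl).2]
    · obtain ⟨c, hc⟩ := hcol' l
      rw [← hAv ⟨0, hq⟩ l, (hsizes _ l ⟨0, hq⟩ c rfl hc).1]
  · rintro ⟨⟨rowGrp, hrow, hrow', hu⟩, ⟨colGrp, hcol, hcol', hv⟩⟩
    exact ⟨rowGrp, colGrp, hrow, hrow', hcol, hcol', fun i l r c hr hc =>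
      ⟨by rw [hAv, ← hc, hv], by rw [hBu, ← hr, hu]⟩⟩

theorem btp_product_assoc_general {q s t p t' p' : ℕ}
    (hq : 1 ≤ q) (ht : 1 ≤ t) (hp : 1 ≤ p) (hp' : 1 ≤ p')
    (A : Fin q → Fin s → ℕ × ℕ) (B : Fin t → Fin p → ℕ × ℕ)
    (C : Fin t' → Fin p' → ℕ × ℕ)
    (hBpos : IsBidegMatrix B)
    (y : Fin q → ℕ) (v : Fin s → ℕ) (u : Fin t → ℕ) (x : Fin p → ℕ)
    (w : Fin t' → ℕ) (z : Fin p' → ℕ)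
    (hAv : ∀ i j, (A i j).2 = v j)
    (hBu : ∀ i j, (B i j).1 = u i) (hBx : ∀ i j, (B i j).2 = x j)
    (hCw : ∀ i j, (C i j).1 = w i) :
    (IsBTP A B →
      (IsBTP (fun (i : Fin t) (l : Fin s) => (groupSum u y i, groupSum v x l)) C ↔
        IsBTP B C)) ∧
    (IsBTP B C →
      (IsBTP A (fun (i : Fin t') (j : Fin p) => (groupSum w u i, groupSum x z j)) ↔
        IsBTP A B)) := by
  have hu (i : Fin t) : 0 < u i := hBu i ⟨0, hp⟩ ▸ (hBpos i ⟨0, hp⟩).1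
  have hx (j : Fin p) : 0 < x j := hBx ⟨0, ht⟩ j ▸ (hBpos ⟨0, ht⟩ j).2
  refine ⟨fun hAB => ?_, fun hBC => ?_⟩
  · have hv := ((isBTP_iff hq hp A B hAv hBu).1 hAB).2
    refine (isBTP_iff ht hp' _ C (v := groupSum v x) (fun _ _ => rfl) hCw).trans ?_
    rw [hasConsecutiveBlocks_groupSum_iff hv hx, isBTP_iff ht hp' B C hBx hCw]
  · have hw := ((isBTP_iff ht hp' B C hBx hCw).1 hBC).1
    refine (isBTP_iff hq hp A _ (u := groupSum w u) hAv (fun _ _ => rfl)).trans ?_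
    rw [hasConsecutiveBlocks_groupSum_iff hw hu, isBTP_iff hq hp A B hAv hBu]

/-- Let `A` (`q × s`, cls `y`, rls `v`), `B` (`t × p`, cls `u`, rls `x`), and `C`
(`t′ × p′`, cls `w`, rls `z`) be bisequence matrices.  If `(A,B)` is a BTP, the
product shape `A·B` is the `t × s` bisequence matrix whose row leaf sequence is
`(X_1,…,X_s)` with `X_l` the sum of the `x_j` over the `l`-th consecutive group of
`v_l` columns of `B`, and whose column leaf sequence is `(Y_1,…,Y_t)` with `Y_i` the
sum of the `y` over the `i`-th consecutive group of `u_i` rows of `A`; `B·C` is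
defined analogously.  Then: (1) if `(A,B)` is a BTP, then `(A·B, C)` is a BTP iff
`(B, C)` is; and (2) if `(B,C)` is a BTP, then `(A, B·C)` is a BTP iff `(A, B)` is. -/
theorem btp_product_assoc {q s t p t' p' : ℕ}
    (hq : 1 ≤ q) (hs : 1 ≤ s) (ht : 1 ≤ t) (hp : 1 ≤ p) (ht' : 1 ≤ t') (hp' : 1 ≤ p')
    (A : Fin q → Fin s → ℕ × ℕ) (B : Fin t → Fin p → ℕ × ℕ)
    (C : Fin t' → Fin p' → ℕ × ℕ)
    (hApos : IsBidegMatrix A) (hBpos : IsBidegMatrix B) (hCpos : IsBidegMatrix C)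
    (y : Fin q → ℕ) (v : Fin s → ℕ) (u : Fin t → ℕ) (x : Fin p → ℕ)
    (w : Fin t' → ℕ) (z : Fin p' → ℕ)
    (hAy : ∀ i j, (A i j).1 = y i) (hAv : ∀ i j, (A i j).2 = v j)
    (hBu : ∀ i j, (B i j).1 = u i) (hBx : ∀ i j, (B i j).2 = x j)
    (hCw : ∀ i j, (C i j).1 = w i) (hCz : ∀ i j, (C i j).2 = z j) :
    (IsBTP A B →
      (IsBTP (fun (i : Fin t) (l : Fin s) => (groupSum u y i, groupSum v x l)) C ↔
        IsBTP B C)) ∧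
    (IsBTP B C →
      (IsBTP A (fun (i : Fin t') (j : Fin p) => (groupSum w u i, groupSum x z j)) ↔
        IsBTP A B)) :=
  btp_product_assoc_general hq ht hp hp' A B C hBpos y v u x w z hAv hBu hBx hCw
end
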